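/- arXiv:1807.04023 — 3 statements merged into one kernel-verified Lean document; each statement's English description precedes it below -/
import Mathlib

section
/- For ideals A, B of R and a submodule element n of M, A(Bn) = (AB)n. -/
/-- An le-module over a commutative ring `R`: a commutative monoid and complete
lattice with top element `e = ⊤`, addition distributing over arbitrary joins,
with an `R`-action satisfying the le-module axioms. -/
class LeModule (R : Type*) (M : Type*) [CommRing R] extends
    AddCommMonoid M, CompleteLattice M, SMul R M where
  add_sSup : ∀ (m : M) (S : Set M), m + sSup S = ⨆ x ∈ S, m + x
  smul_add' : ∀ (r : R) (m₁ m₂ : M), r • (m₁ + m₂) = r • m₁ + r • m₂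
  add_smul_le : ∀ (r₁ r₂ : R) (m : M), (r₁ + r₂) • m ≤ r₁ • m + r₂ • m
  mul_smul' : ∀ (r₁ r₂ : R) (m : M), (r₁ * r₂) • m = r₁ • (r₂ • m)
  one_smul' : ∀ m : M, (1 : R) • m = m
  zero_smul' : ∀ m : M, (0 : R) • m = (0 : M)
  smul_zero' : ∀ r : R, r • (0 : M) = (0 : M)
  smul_sSup : ∀ (r : R) (S : Set M), r • sSup S = ⨆ x ∈ S, r • x

namespace LeModule

variable (R : Type*) {M : Type*} [CommRing R] [LeModule R M]

/-- `n` is a submodule element: `n + n ≤ n` and `r • n ≤ n` for all `r ∈ R`. -/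
def IsSub (n : M) : Prop := n + n ≤ n ∧ ∀ r : R, r • n ≤ n

variable {R}

/-- `A n = ⋁ { a₁•n + ⋯ + aₖ•n : aᵢ ∈ A }`. -/
def idealSMul (A : Ideal R) (n : M) : M :=
  sSup { m : M | ∃ l : List R, (∀ a ∈ l, a ∈ A) ∧ m = (l.map (fun a => a • n)).sum }

/-- `(n : A) = ⋁ { x ∈ M : A x ≤ n }`. -/
def colonIdeal (n : M) (A : Ideal R) : M := sSup { x : M | idealSMul A x ≤ n }

/-- `(n : r) = ⋁ { x ∈ M : r • x ≤ n }`. -/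
def colonElem (n : M) (r : R) : M := sSup { x : M | r • x ≤ n }

variable (R)

/-- `(k : m) = { r ∈ R : r • m ≤ k }` as a set of ring elements. -/
def colonSet (k m : M) : Set R := { r : R | r • m ≤ k }

/-- `Rad(n) = { a ∈ R : aᵐ • e ≤ n for some positive m }`. -/
def radSet (n : M) : Set R := { a : R | ∃ m : ℕ, 0 < m ∧ a ^ m • (⊤ : M) ≤ n }

/-- A primary element of an le-module. -/
def IsPrimaryElem (q : M) : Prop :=
  IsSub R q ∧ q ≠ ⊤ ∧
    ∀ (a : R) (x : M), a • x ≤ q → x ≤ q ∨ ∃ m : ℕ, 0 < m ∧ a ^ m • (⊤ : M) ≤ q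

/-- A prime submodule element of an le-module. -/
def IsPrimeElem (p : M) : Prop :=
  IsSub R p ∧ p ≠ ⊤ ∧
    ∀ (r : R) (n : M), r • n ≤ p → r • (⊤ : M) ≤ p ∨ n ≤ p

end LeModule

open LeModule

/-!
`A n` is the least `X` with `0 ≤ X` and `X + X ≤ X` that lies above every `a • n`, `a ∈ A`, so it
suffices to compare generators. For `a ∈ A`, the action distributes over the join and the sums
defining `B n`, giving `a • B n = ⋁ (a b₁) • n + ⋯ + (a bₖ) • n ≤ (A B) n`. Conversely, `c • n ≤ A (B n)`
for `c ∈ A B` by induction on `c`, using `(a b) • n = a • (b • n)` and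
`(x + y) • n ≤ x • n + y • n`.
-/

namespace LeModule

variable {R M : Type*} [CommRing R] [LeModule R M]

theorem smul_mono_right (r : R) {x y : M} (h : x ≤ y) : r • x ≤ r • y := by
  have hxy := smul_sSup r ({x, y} : Set M)
  rw [sSup_pair, sup_eq_right.mpr h] at hxy
  rw [hxy]
  exact le_iSup₂_of_le (f := fun z (_ : z ∈ ({x, y} : Set M)) => r • z) x (by simp) le_rfl

variable (R) in
theorem add_le_add_left {a b : M} (h : a ≤ b) (c : M) : c + a ≤ c + b := by
  have hab := add_sSup (R := R) c ({a, b} : Set M)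
  rw [sSup_pair, sup_eq_right.mpr h] at hab
  rw [hab]
  exact le_iSup₂_of_le (f := fun z (_ : z ∈ ({a, b} : Set M)) => c + z) a (by simp) le_rfl

variable (R) in
theorem add_le_add {a b c d : M} (hab : a ≤ b) (hcd : c ≤ d) : a + c ≤ b + d :=
  calc a + c ≤ a + d := add_le_add_left R hcd a
    _ = d + a := add_comm a d
    _ ≤ d + b := add_le_add_left R hab d
    _ = b + d := add_comm d b

variable (R) in
theorem list_sum_le {X : M} (h0 : 0 ≤ X) (hX : X + X ≤ X) {l : List M}
    (h : ∀ x ∈ l, x ≤ X) : l.sum ≤ X := by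
  induction l with
  | nil => simpa using h0
  | cons a t ih =>
    rw [List.sum_cons]
    exact (add_le_add R (h a List.mem_cons_self)
      (ih fun x hx => h x (List.mem_cons_of_mem a hx))).trans hX

theorem smul_list_sum (r : R) (l : List M) : r • l.sum = (l.map (r • ·)).sum := by
  induction l with
  | nil => exact smul_zero' r
  | cons a t ih => rw [List.sum_cons, smul_add', ih, List.map_cons, List.sum_cons]

theorem zero_le_idealSMul (A : Ideal R) (n : M) : 0 ≤ idealSMul A n :=
  le_sSup ⟨[], by simp, by simp⟩

theorem smul_le_idealSMul {A : Ideal R} {a : R} (ha : a ∈ A) (n : M) :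
    a • n ≤ idealSMul A n :=
  le_sSup ⟨[a], by simpa, by simp⟩

theorem idealSMul_add_self_le (A : Ideal R) (n : M) :
    idealSMul A n + idealSMul A n ≤ idealSMul A n := by
  rw [idealSMul, add_sSup (R := R)]
  refine iSup₂_le fun x hx => ?_
  rw [add_comm, add_sSup (R := R)]
  refine iSup₂_le fun y hy => ?_
  obtain ⟨l₁, hl₁, rfl⟩ := hx
  obtain ⟨l₂, hl₂, rfl⟩ := hy
  refine le_sSup ⟨l₂ ++ l₁, fun a ha => ?_, by rw [List.map_append, List.sum_append, add_comm]⟩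
  rcases List.mem_append.mp ha with h | h
  exacts [hl₂ a h, hl₁ a h]

theorem idealSMul_le {A : Ideal R} {n X : M} (h0 : 0 ≤ X) (hX : X + X ≤ X)
    (h : ∀ a ∈ A, a • n ≤ X) : idealSMul A n ≤ X := by
  refine sSup_le ?_
  rintro _ ⟨l, hl, rfl⟩
  refine list_sum_le R h0 hX fun x hx => ?_
  obtain ⟨a, ha, rfl⟩ := List.mem_map.mp hx
  exact h a (hl a ha)

theorem smul_idealSMul_le {A B : Ideal R} {a : R} (ha : a ∈ A) (n : M) :
    a • idealSMul B n ≤ idealSMul (A * B) n := by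
  rw [idealSMul, smul_sSup]
  refine iSup₂_le ?_
  rintro _ ⟨l, hl, rfl⟩
  have hsum : a • (l.map (· • n)).sum = ((l.map (a * ·)).map (· • n)).sum := by
    simp only [smul_list_sum, List.map_map, Function.comp_def, mul_smul']
  refine le_sSup ⟨l.map (a * ·), fun c hc => ?_, hsum⟩
  obtain ⟨b, hb, rfl⟩ := List.mem_map.mp hc
  exact Ideal.mul_mem_mul ha (hl b hb)

theorem smul_le_idealSMul_idealSMul {A B : Ideal R} {c : R} (hc : c ∈ A * B) (n : M) :
    c • n ≤ idealSMul A (idealSMul B n) := by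
  refine Submodule.mul_induction_on hc (fun a ha b hb => ?_) fun x y hx hy => ?_
  · rw [mul_smul']
    exact (smul_mono_right a (smul_le_idealSMul hb n)).trans (smul_le_idealSMul ha _)
  · calc (x + y) • n ≤ x • n + y • n := add_smul_le x y n
      _ ≤ idealSMul A (idealSMul B n) + idealSMul A (idealSMul B n) := add_le_add R hx hy
      _ ≤ idealSMul A (idealSMul B n) := idealSMul_add_self_le _ _

end LeModule

theorem idealSMul_idealSMul_general {R M : Type*} [CommRing R] [LeModule R M]
    (A B : Ideal R) (n : M) :
    idealSMul A (idealSMul B n) = idealSMul (A * B) n :=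
  le_antisymm
    (idealSMul_le (zero_le_idealSMul _ _) (idealSMul_add_self_le _ _)
      fun _ ha => smul_idealSMul_le ha n)
    (idealSMul_le (zero_le_idealSMul _ _) (idealSMul_add_self_le _ _)
      fun _ hc => smul_le_idealSMul_idealSMul hc n)

/-- `A (B n) = (A B) n` for a submodule element `n`. -/
theorem idealSMul_idealSMul {R M : Type*} [CommRing R] [LeModule R M]
    (A B : Ideal R) (n : M) (hn : IsSub R n) :
    idealSMul A (idealSMul B n) = idealSMul (A * B) n :=
  idealSMul_idealSMul_general A B n
end

section
/- If q is a submodule element of an le-module M such that Rad(q) is a maximal ideal of R, then q is a primary element. -/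
open LeModule

/-! If `a ∉ Rad(q)`, maximality makes `a` coprime to some `i ∈ Rad(q)`, hence to a power `iᵐ`
with `iᵐ e ≤ q`; from `1 = u a + v iᵐ` and `a x ≤ q` one gets `x ≤ (u a) x + (v iᵐ) x ≤ q`. -/

namespace LeModule

variable {R M : Type*} [CommRing R] [LeModule R M]

variable (R) in
theorem add_le_add_left_s11 (m : M) {x y : M} (h : x ≤ y) : m + x ≤ m + y := by
  have hpair := LeModule.add_sSup (R := R) m ({x, y} : Set M)
  rw [sSup_pair, sup_eq_right.mpr h] at hpair
  exact hpair ▸ le_biSup _ (Set.mem_insert x {y})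

namespace IsSub

variable {q : M}

theorem add_le (hq : IsSub R q) {x y : M} (hx : x ≤ q) (hy : y ≤ q) : x + y ≤ q :=
  calc x + y ≤ x + q := LeModule.add_le_add_left_s11 R x hy
    _ = q + x := add_comm x q
    _ ≤ q + q := LeModule.add_le_add_left_s11 R q hx
    _ ≤ q := hq.1

theorem smul_le (hq : IsSub R q) (r : R) {x : M} (hx : x ≤ q) : r • x ≤ q :=
  (smul_mono_right r hx).trans (hq.2 r)

theorem le_of_smul_le_of_isCoprime (hq : IsSub R q) {a b : R} {x : M} (hax : a • x ≤ q)
    (hb : b • (⊤ : M) ≤ q) (hab : IsCoprime a b) : x ≤ q := by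
  obtain ⟨u, v, huv⟩ := hab
  calc x = (u * a + v * b) • x := by rw [huv, LeModule.one_smul']
    _ ≤ (u * a) • x + (v * b) • x := LeModule.add_smul_le _ _ _
    _ ≤ q := by
      refine hq.add_le ?_ ?_
      · rw [LeModule.mul_smul']
        exact hq.smul_le u hax
      · rw [LeModule.mul_smul']
        exact hq.smul_le v ((smul_mono_right b le_top).trans hb)

end IsSub

end LeModule

/-- if `Rad(q)` is a maximal ideal then `q` is primary. -/
theorem isPrimary_of_radSet_isMaximal {R M : Type*} [CommRing R] [LeModule R M]
    (q : M) (hq : IsSub R q) (P : Ideal R) (hP : (P : Set R) = radSet R q)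
    (hmax : P.IsMaximal) :
    IsPrimaryElem R q := by
  have hmem : ∀ a : R, a ∈ P ↔ a ∈ radSet R q := fun a => by rw [← SetLike.mem_coe, hP]
  have hq_ne_top : q ≠ ⊤ := fun htop =>
    hmax.ne_top <| (Ideal.eq_top_iff_one P).mpr <|
      (hmem 1).mpr ⟨1, one_pos, le_top.trans_eq htop.symm⟩
  refine ⟨hq, hq_ne_top, fun a x hax => ?_⟩
  by_cases ha : a ∈ P
  · exact Or.inr ((hmem a).mp ha)
  · obtain ⟨z, i, hi, hzi⟩ := hmax.exists_inv ha
    obtain ⟨m, -, him⟩ := (hmem i).mp hi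
    have hcop : IsCoprime a i := ⟨z, 1, by rw [one_mul, hzi]⟩
    exact Or.inl (hq.le_of_smul_le_of_isCoprime hax him hcop.pow_right)
end

section
/- Let p be a proper submodule element of an le-module M. If (p:e) is a prime ideal of R and p is primary, then p is a prime submodule element. -/
namespace LeModule

variable {R M : Type*} [CommRing R] [LeModule R M]

theorem IsPrimaryElem.isPrimeElem_of_pow_smul_top_le {p : M} (hp : IsPrimaryElem R p)
    (hrad : ∀ (r : R) (m : ℕ), 0 < m → r ^ m • (⊤ : M) ≤ p → r • (⊤ : M) ≤ p) :
    IsPrimeElem R p := by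
  obtain ⟨hsub, hne, hprimary⟩ := hp
  refine ⟨hsub, hne, fun r n hrn => ?_⟩
  rcases hprimary r n hrn with hn | ⟨m, hm, hpow⟩
  · exact Or.inr hn
  · exact Or.inl (hrad r m hm hpow)

end LeModule

open LeModule

/-- if `(p : e)` is a prime ideal and `p` is primary, then `p` is a
prime submodule element. -/
theorem isPrimeElem_of_colonSet_isPrime_of_isPrimary {R M : Type*} [CommRing R] [LeModule R M]
    (p : M) (P : Ideal R) (hP : (P : Set R) = colonSet R p (⊤ : M)) (hPp : P.IsPrime)
    (hq : IsPrimaryElem R p) :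
    IsPrimeElem R p := by
  have hmem (r : R) : r ∈ P ↔ r • (⊤ : M) ≤ p := by
    rw [← SetLike.mem_coe, hP]
    rfl
  refine hq.isPrimeElem_of_pow_smul_top_le fun r m _ hpow => ?_
  exact (hmem r).1 (hPp.mem_of_pow_mem m ((hmem _).2 hpow))
end
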